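/- arXiv:2104.02259 — 3 statements merged into one kernel-verified Lean document; each statement's English description precedes it below -/
import Mathlib

section
/- Let f be a polynomial, 0 < α < 1, c ∈ ℝ, and x > c. Then the Caputo fractional derivative of order 1+α satisfies (x−c)·(ᶜ_cD^{1+α}_x f)(x) = (ᶜ_cD^α_x x) · Σ_{k=2}^∞ [Γ(2−α)/Γ(k−α)] f^{(k)}(c)(x−c)^{k−1}, where ᶜ_cD^α_x x = (x−c)^{1−α}/Γ(2−α). -/
/-- The Caputo fractional derivative of order `1 + α` (0 < α < 1) of `f` at `x`
with base point `c < x`, defined via the second derivative of `f`. -/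
noncomputable def caputoSucc (α c : ℝ) (f : ℝ → ℝ) (x : ℝ) : ℝ :=
  (1 / Real.Gamma (1 - α)) * ∫ s in c..x, deriv (deriv f) s * (x - s) ^ (-α)

/-!
Expand `p''` in its Taylor polynomial at `c`. The Caputo integral becomes a finite combination of
the integrals `∫ s in c..x, (s - c) ^ k * (x - s) ^ (-α)`, and the substitution
`s = c + (x - c) * t` turns each of them into `(x - c) ^ (k + 1 - α)` times the Beta integral
`B(k + 1, 1 - α) = k! Γ(1 - α) / Γ(k + 2 - α)`. The factor `k!` turns the Taylor coefficient
back into `p^(k+2)(c)`, and `Γ(1 - α)` cancels against the normalisation of `caputoSucc`.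
-/

open Polynomial Real intervalIntegral Nat

theorem Polynomial.iteratedDeriv_eval {𝕜 : Type*} [NontriviallyNormedField 𝕜] (p : 𝕜[X])
    (n : ℕ) :
    iteratedDeriv n (fun t => p.eval t) = fun t => (derivative^[n] p).eval t := by
  induction n with
  | zero => rfl
  | succ n ih =>
    rw [iteratedDeriv_succ, ih, Function.iterate_succ_apply']
    ext t
    exact Polynomial.deriv _

theorem Polynomial.eval_eq_sum_range_hasseDeriv {R : Type*} [CommRing R] (q : R[X]) (c s : R) :
    q.eval s = ∑ k ∈ Finset.range (q.natDegree + 1), (hasseDeriv k q).eval c * (s - c) ^ k := by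
  rw [← taylor_eval_sub c q s, eval_eq_sum_range, natDegree_taylor]
  simp only [taylor_coeff]

theorem integral_rpow_mul_one_sub_rpow {u v : ℝ} (hu : 0 < u) (hv : 0 < v) :
    ∫ t in (0 : ℝ)..1, t ^ (u - 1) * (1 - t) ^ (v - 1) = Gamma u * Gamma v / Gamma (u + v) := by
  have hbeta : Complex.betaIntegral u v =
      ((∫ t in (0 : ℝ)..1, t ^ (u - 1) * (1 - t) ^ (v - 1) : ℝ) : ℂ) := by
    rw [Complex.betaIntegral, ← intervalIntegral.integral_ofReal]
    refine integral_congr fun t ht => ?_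
    rw [Set.uIcc_of_le zero_le_one] at ht
    rw [Complex.ofReal_mul, Complex.ofReal_cpow ht.1, Complex.ofReal_cpow (sub_nonneg.2 ht.2)]
    norm_cast
  have h := Complex.Gamma_mul_Gamma_eq_betaIntegral (s := u) (t := v) (by simpa) (by simpa)
  rw [hbeta, ← Complex.ofReal_add, Complex.Gamma_ofReal, Complex.Gamma_ofReal,
    Complex.Gamma_ofReal] at h
  rw [eq_div_iff (Gamma_pos_of_pos (add_pos hu hv)).ne']
  exact_mod_cast (h.trans (mul_comm _ _)).symm

theorem integral_sub_rpow_mul_sub_rpow {u v c x : ℝ} (hu : 0 < u) (hv : 0 < v) (hcx : c < x) :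
    ∫ s in c..x, (s - c) ^ (u - 1) * (x - s) ^ (v - 1) =
      Gamma u * Gamma v / Gamma (u + v) * (x - c) ^ (u + v - 1) := by
  have hxc : 0 < x - c := sub_pos.2 hcx
  have hscale : ∀ t ∈ Set.uIcc (0 : ℝ) 1,
      (c + (x - c) * t - c) ^ (u - 1) * (x - (c + (x - c) * t)) ^ (v - 1) =
        (x - c) ^ (u - 1) * (x - c) ^ (v - 1) * (t ^ (u - 1) * (1 - t) ^ (v - 1)) := by
    intro t ht
    rw [Set.uIcc_of_le zero_le_one] at ht
    rw [show c + (x - c) * t - c = (x - c) * t by ring,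
      show x - (c + (x - c) * t) = (x - c) * (1 - t) by ring,
      mul_rpow hxc.le ht.1, mul_rpow hxc.le (sub_nonneg.2 ht.2)]
    ring
  have hsubst := smul_integral_comp_add_mul (a := 0) (b := 1)
    (fun s => (s - c) ^ (u - 1) * (x - s) ^ (v - 1)) (x - c) c
  rw [mul_zero, mul_one, add_zero, add_sub_cancel] at hsubst
  rw [← hsubst, integral_congr hscale, integral_const_mul, integral_rpow_mul_one_sub_rpow hu hv,
    smul_eq_mul,
    show u + v - 1 = 1 + (u - 1) + (v - 1) by ring, rpow_add hxc, rpow_add hxc, rpow_one]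
  ring

theorem integral_sub_pow_mul_sub_rpow_neg (k : ℕ) {α c x : ℝ} (hα : α < 1) (hcx : c < x) :
    ∫ s in c..x, (s - c) ^ k * (x - s) ^ (-α) =
      k ! * Gamma (1 - α) / Gamma (k + 2 - α) * (x - c) ^ ((k : ℝ) + 1 - α) := by
  have h := integral_sub_rpow_mul_sub_rpow (u := k + 1) (v := 1 - α) (by positivity)
    (sub_pos.2 hα) hcx
  simp only [add_sub_cancel_right, rpow_natCast, sub_sub_cancel_left,
    Gamma_nat_eq_factorial] at h
  rw [h]
  ring_nf

theorem integral_eval_mul_sub_rpow_neg (q : ℝ[X]) {α c x : ℝ} (hα : α < 1) (hcx : c < x) :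
    ∫ s in c..x, q.eval s * (x - s) ^ (-α) =
      Gamma (1 - α) * ∑' k : ℕ,
        (derivative^[k] q).eval c / Gamma (k + 2 - α) * (x - c) ^ ((k : ℝ) + 1 - α) := by
  have hint (k : ℕ) :
      IntervalIntegrable (fun s => (s - c) ^ k * (x - s) ^ (-α)) MeasureTheory.volume c x := by
    have h := (intervalIntegrable_rpow' (a := x - c) (b := x - x)
      (neg_lt_neg_iff.2 hα)).comp_sub_left x
    simp only [sub_sub_cancel] at h
    exact h.continuousOn_mul (by fun_prop)
  have hfact (k : ℕ) : (derivative^[k] q).eval c = k ! * (hasseDeriv k q).eval c := by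
    rw [← factorial_smul_hasseDeriv, LinearMap.smul_apply, eval_smul, nsmul_eq_mul]
  have htaylor (s : ℝ) : q.eval s * (x - s) ^ (-α) =
      ∑ k ∈ Finset.range (q.natDegree + 1),
        (hasseDeriv k q).eval c * ((s - c) ^ k * (x - s) ^ (-α)) := by
    rw [q.eval_eq_sum_range_hasseDeriv c, Finset.sum_mul]
    simp only [mul_assoc]
  rw [tsum_eq_sum (s := Finset.range (q.natDegree + 1)), Finset.mul_sum,
    integral_congr fun s _ => htaylor s, integral_finsetSum fun k _ => (hint k).const_mul _]
  · refine Finset.sum_congr rfl fun k _ => ?_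
    rw [integral_const_mul, integral_sub_pow_mul_sub_rpow_neg k hα hcx, hfact]
    ring
  · intro k hk
    rw [iterate_derivative_eq_zero (by simpa using hk)]
    simp

theorem caputoSucc_taylor_general (α c x : ℝ) (hα1 : α < 1) (hcx : c < x)
    (p : Polynomial ℝ) :
    (x - c) * caputoSucc α c (fun t => p.eval t) x =
      (x - c) ^ (1 - α) / Real.Gamma (2 - α) *
        ∑' k : ℕ,
          Real.Gamma (2 - α) / Real.Gamma ((k : ℝ) + 2 - α) *
            iteratedDeriv (k + 2) (fun t => p.eval t) c * (x - c) ^ ((k : ℕ) + 1) := by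
  have hxc : 0 < x - c := sub_pos.2 hcx
  have hΓ1 : Gamma (1 - α) ≠ 0 := (Gamma_pos_of_pos (sub_pos.2 hα1)).ne'
  have hΓ2 : Gamma (2 - α) ≠ 0 := (Gamma_pos_of_pos (by linarith)).ne'
  have hsecond : deriv (deriv fun t => p.eval t) = fun t => (derivative^[2] p).eval t :=
    (iteratedDeriv_eq_iterate (n := 2)).symm.trans (p.iteratedDeriv_eval 2)
  rw [caputoSucc, hsecond, integral_eval_mul_sub_rpow_neg _ hα1 hcx, one_div,
    inv_mul_cancel_left₀ hΓ1, ← tsum_mul_left, ← tsum_mul_left]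
  refine tsum_congr fun k => ?_
  rw [p.iteratedDeriv_eval, ← Function.iterate_add_apply,
    show (k : ℝ) + 1 - α = 1 - α + k by ring, rpow_add hxc, rpow_natCast]
  field_simp
  ring

theorem caputoSucc_taylor (α c x : ℝ) (hα0 : 0 < α) (hα1 : α < 1) (hcx : c < x)
    (p : Polynomial ℝ) :
    (x - c) * caputoSucc α c (fun t => p.eval t) x =
      (x - c) ^ (1 - α) / Real.Gamma (2 - α) *
        ∑' k : ℕ,
          Real.Gamma (2 - α) / Real.Gamma ((k : ℝ) + 2 - α) *
            iteratedDeriv (k + 2) (fun t => p.eval t) c * (x - c) ^ ((k : ℕ) + 1) :=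
  caputoSucc_taylor_general α c x hα1 hcx p
end

section
/- Let f(x) = (1/2)‖W^T x − y‖² with W ∈ ℝ^{d×m}, y ∈ ℝ^m. For 0 < α < 1 and base point c ∈ ℝ^d, the j-th component of the coordinate-wise Caputo fractional gradient of order α at x equals (ᶜ_{c_j}D^α_{x_j} x_j) · [ Σ_{i=1}^m ( w_{ij}² γ_α (x_j − c_j) + w_{ij}(w_i^T x − y_i) ) ], where γ_α = −(1−α)/(2−α) and w_i is the i-th column of W. -/
/-!
Along the `j`-th coordinate the least-squares objective is a quadratic in `u` with affine
derivative `A u + B`, where `A = ∑ᵢ w_{ij}²`. For such a function the Caputo integral becomes,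
after the substitution `t = |x - s|`, a combination of `∫₀ᴸ t^(-α)` and `∫₀ᴸ t^(1-α)`; with
`Γ(2 - α) = (1 - α) Γ(1 - α)` this is `ᶜD^α x · (A (γ_α (x - c) + x) + B)`, and regrouping
`A` and `B` as sums over `i` gives the stated formula.
-/

/-- The Caputo fractional derivative of order `α` (0 < α < 1) of `f` at `x`
with base point `c`. -/
noncomputable def caputo (α c : ℝ) (f : ℝ → ℝ) (x : ℝ) : ℝ :=
  if c ≤ x then (1 / Real.Gamma (1 - α)) * ∫ s in c..x, deriv f s * (x - s) ^ (-α)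
  else (-1 / Real.Gamma (1 - α)) * ∫ s in x..c, deriv f s * (s - x) ^ (-α)

/-- j-th component of the coordinate-wise Caputo fractional gradient of order α:
the one-dimensional Caputo derivative in the j-th coordinate. -/
noncomputable def caputoGrad {d : ℕ} (α : ℝ) (c : Fin d → ℝ) (f : (Fin d → ℝ) → ℝ)
    (x : Fin d → ℝ) (j : Fin d) : ℝ :=
  caputo α (c j) (fun u => f (Function.update x j u)) (x j)

open intervalIntegral

section CaputoAffine

variable {α : ℝ}

theorem integral_affine_mul_rpow_neg (hα1 : α < 1) {L : ℝ} (hL : 0 ≤ L) (P Q : ℝ) :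
    ∫ t in (0 : ℝ)..L, (P + Q * t) * t ^ (-α) =
      L ^ (1 - α) / (1 - α) * (P + Q * ((1 - α) / (2 - α)) * L) := by
  have h₁ : (-1 : ℝ) < -α := by linarith
  have h₂ : (-1 : ℝ) < 1 - α := by linarith
  have hsplit : ∀ t ∈ Set.uIcc 0 L,
      (P + Q * t) * t ^ (-α) = P * t ^ (-α) + Q * t ^ (1 - α) := by
    intro t ht
    rw [Set.uIcc_of_le hL] at ht
    rw [show 1 - α = 1 + -α by ring, Real.rpow_add' ht.1 (by linarith), Real.rpow_one]
    ring
  rw [integral_congr hsplit, integral_add ((intervalIntegrable_rpow' h₁).const_mul P)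
      ((intervalIntegrable_rpow' h₂).const_mul Q), integral_const_mul, integral_const_mul,
    integral_rpow (Or.inl h₁), integral_rpow (Or.inl h₂), show -α + 1 = 1 - α by ring,
    show 1 - α + 1 = 2 - α by ring, Real.zero_rpow (by linarith), Real.zero_rpow (by linarith),
    show L ^ (2 - α) = L ^ (1 - α) * L by
      rw [show 2 - α = (1 - α) + 1 by ring, Real.rpow_add' hL (by linarith), Real.rpow_one]]
  field_simp [show (1 : ℝ) - α ≠ 0 by linarith, show (2 : ℝ) - α ≠ 0 by linarith]
  ring

theorem integral_affine_mul_rpow_neg_sub_left (hα1 : α < 1) {a b : ℝ} (hab : a ≤ b) (A B : ℝ) :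
    ∫ s in a..b, (A * s + B) * (b - s) ^ (-α) =
      (b - a) ^ (1 - α) / (1 - α) * (A * b + B - A * ((1 - α) / (2 - α)) * (b - a)) := by
  have hshift : ∀ s,
      (A * s + B) * (b - s) ^ (-α) = (A * b + B + -A * (b - s)) * (b - s) ^ (-α) :=
    fun s => by ring
  simp_rw [hshift]
  rw [integral_comp_sub_left (fun t => (A * b + B + -A * t) * t ^ (-α)), sub_self,
    integral_affine_mul_rpow_neg hα1 (sub_nonneg.2 hab)]
  congr 1
  ring

theorem integral_affine_mul_rpow_neg_sub_right (hα1 : α < 1) {a b : ℝ} (hab : a ≤ b) (A B : ℝ) :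
    ∫ s in a..b, (A * s + B) * (s - a) ^ (-α) =
      (b - a) ^ (1 - α) / (1 - α) * (A * a + B + A * ((1 - α) / (2 - α)) * (b - a)) := by
  have hshift : ∀ s,
      (A * s + B) * (s - a) ^ (-α) = (A * a + B + A * (s - a)) * (s - a) ^ (-α) :=
    fun s => by ring
  simp_rw [hshift]
  rw [integral_comp_sub_right (fun t => (A * a + B + A * t) * t ^ (-α)), sub_self,
    integral_affine_mul_rpow_neg hα1 (sub_nonneg.2 hab)]

theorem caputo_of_deriv_eq_affine (hα1 : α < 1) {f : ℝ → ℝ} {A B : ℝ}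
    (hf : deriv f = fun s => A * s + B) (c x : ℝ) :
    caputo α c f x = Real.sign (x - c) * |x - c| ^ (1 - α) / Real.Gamma (2 - α) *
      (A * (-((1 - α) / (2 - α)) * (x - c) + x) + B) := by
  have hΓ : Real.Gamma (2 - α) = (1 - α) * Real.Gamma (1 - α) := by
    rw [show 2 - α = (1 - α) + 1 by ring, Real.Gamma_add_one (by linarith)]
  have hΓ₀ : Real.Gamma (1 - α) ≠ 0 := (Real.Gamma_pos_of_pos (by linarith)).ne'
  have h₁ : (1 : ℝ) - α ≠ 0 := by linarith
  unfold caputo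
  rw [hf, hΓ]
  rcases lt_trichotomy c x with hcx | rfl | hxc
  · rw [if_pos hcx.le, integral_affine_mul_rpow_neg_sub_left hα1 hcx.le,
      Real.sign_of_pos (sub_pos.2 hcx), abs_of_pos (sub_pos.2 hcx)]
    field_simp
    ring
  · simp
  · rw [if_neg (not_le.2 hxc), integral_affine_mul_rpow_neg_sub_right hα1 hxc.le,
      Real.sign_of_neg (sub_neg.2 hxc), abs_sub_comm, abs_of_pos (sub_pos.2 hxc)]
    field_simp
    ring

end CaputoAffine

theorem sum_mul_update {R ι : Type*} [CommRing R] [Fintype ι] [DecidableEq ι]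
    (v x : ι → R) (j : ι) (u : R) :
    ∑ l, v l * Function.update x j u l = ∑ l, v l * x l + v j * (u - x j) := by
  have hupd : Function.update x j u = x + Pi.single j (u - x j) := by
    ext l
    rcases eq_or_ne l j with rfl | hl <;> simp [*]
  simp [hupd, mul_add, Finset.sum_add_distrib, Pi.single_apply]

theorem deriv_half_sum_sq_affine {ι : Type*} [Fintype ι] (a b : ι → ℝ) :
    deriv (fun u => (1 / 2 : ℝ) * ∑ i, (a i * u + b i) ^ 2) =
      fun s => (∑ i, a i ^ 2) * s + ∑ i, a i * b i := by
  funext s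
  have hsq : ∀ i, HasDerivAt (fun u => (a i * u + b i) ^ 2) (2 * (a i * s + b i) * a i) s := by
    intro i
    simpa using (((hasDerivAt_id s).const_mul (a i)).add_const (b i)).fun_pow 2
  rw [((HasDerivAt.fun_sum fun i _ => hsq i).const_mul (1 / 2 : ℝ)).deriv, Finset.mul_sum,
    Finset.sum_mul, ← Finset.sum_add_distrib]
  exact Finset.sum_congr rfl fun i _ => by ring

theorem caputoGrad_leastSquares_general {d m : ℕ} (W : Matrix (Fin d) (Fin m) ℝ)
    (y : Fin m → ℝ) (α : ℝ) (hα1 : α < 1)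
    (c x : Fin d → ℝ) (j : Fin d) :
    caputoGrad α c (fun x => (1 / 2) * ∑ i, (∑ l, W l i * x l - y i) ^ 2) x j =
      (Real.sign (x j - c j) * |x j - c j| ^ (1 - α) / Real.Gamma (2 - α)) *
        ∑ i, ((W j i) ^ 2 * (-((1 - α) / (2 - α))) * (x j - c j) +
          W j i * (∑ l, W l i * x l - y i)) := by
  set e : Fin m → ℝ := fun i => ∑ l, W l i * x l - y i
  have hline : ∀ u i,
      ∑ l, W l i * Function.update x j u l - y i = W j i * u + (e i - W j i * x j) :=
    fun u i => by rw [sum_mul_update (W · i)]; ring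
  have hderiv := deriv_half_sum_sq_affine (W j ·) (fun i => e i - W j i * x j)
  simp only [← hline] at hderiv
  rw [caputoGrad, caputo_of_deriv_eq_affine hα1 hderiv]
  congr 1
  simp only [Finset.sum_mul, ← Finset.sum_add_distrib]
  exact Finset.sum_congr rfl fun i _ => by ring

theorem caputoGrad_leastSquares {d m : ℕ} (W : Matrix (Fin d) (Fin m) ℝ)
    (y : Fin m → ℝ) (α : ℝ) (hα0 : 0 < α) (hα1 : α < 1)
    (c x : Fin d → ℝ) (j : Fin d) :
    caputoGrad α c (fun x => (1 / 2) * ∑ i, (∑ l, W l i * x l - y i) ^ 2) x j =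
      (Real.sign (x j - c j) * |x j - c j| ^ (1 - α) / Real.Gamma (2 - α)) *
        ∑ i, ((W j i) ^ 2 * (-((1 - α) / (2 - α))) * (x j - c j) +
          W j i * (∑ l, W l i * x l - y i)) :=
  caputoGrad_leastSquares_general W y α hα1 c x j
end

section
/- Let W ∈ ℝ^{d×m}, y ∈ ℝ^m, c, x* ∈ ℝ^d with WW^T x* = Wy, R̃ ∈ ℝ^d with R̃_j = Σ_k w_{kj}², and γ ∈ ℝ such that WW^T + γ·diag(R̃) is invertible. Then (I + γK)^{−1}(x* + γK c) = c + (WW^T + γ diag(R̃))^{−1} W (y − W^T c), where K = (WW^T)^{−1} diag(R̃) and WW^T is assumed invertible. -/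
open Matrix

theorem tikhonov_fixed_point {d m : ℕ} (W : Matrix (Fin d) (Fin m) ℝ)
    (y : Fin m → ℝ) (c xs : Fin d → ℝ) (γ : ℝ)
    (Rt : Fin d → ℝ) (hRt : Rt = fun j => ∑ k, (W j k) ^ 2)
    (hxs : (W * Wᵀ).mulVec xs = W.mulVec y)
    (h1 : IsUnit (W * Wᵀ).det)
    (h2 : IsUnit (W * Wᵀ + γ • Matrix.diagonal Rt).det)
    (K : Matrix (Fin d) (Fin d) ℝ) (hK : K = (W * Wᵀ)⁻¹ * Matrix.diagonal Rt) :
    ((1 + γ • K)⁻¹).mulVec (xs + γ • K.mulVec c) =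
      c + ((W * Wᵀ + γ • Matrix.diagonal Rt)⁻¹).mulVec (W.mulVec (y - Wᵀ.mulVec c)) := by
  subst hK
  set A := W * Wᵀ with hA
  set D := Matrix.diagonal Rt with hD
  set M := A + γ • D with hM
  have hAinv : A⁻¹ * A = 1 := Matrix.nonsing_inv_mul _ h1
  have hAinv' : A * A⁻¹ = 1 := Matrix.mul_nonsing_inv _ h1
  have hMinv : M⁻¹ * M = 1 := Matrix.nonsing_inv_mul _ h2
  have hK1 : (1 : Matrix (Fin d) (Fin d) ℝ) + γ • (A⁻¹ * D) = A⁻¹ * M := by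
    rw [hM, Matrix.mul_add, hAinv, Matrix.mul_smul]
  have hinv : ((1 : Matrix (Fin d) (Fin d) ℝ) + γ • (A⁻¹ * D))⁻¹ = M⁻¹ * A := by
    rw [hK1, Matrix.mul_inv_rev, Matrix.nonsing_inv_nonsing_inv _ h1]
  rw [hinv]
  have hAK : A * (A⁻¹ * D) = D := by rw [← Matrix.mul_assoc, hAinv', Matrix.one_mul]
  have lhs_eq : (M⁻¹ * A).mulVec (xs + γ • (A⁻¹ * D).mulVec c)
      = M⁻¹.mulVec (W.mulVec y + γ • D.mulVec c) := by
    rw [← Matrix.mulVec_mulVec, Matrix.mulVec_add, Matrix.mulVec_smul,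
      Matrix.mulVec_mulVec, hAK, hxs]
  rw [lhs_eq]
  have hc : c = M⁻¹.mulVec (M.mulVec c) := by
    rw [Matrix.mulVec_mulVec, hMinv, Matrix.one_mulVec]
  calc M⁻¹.mulVec (W.mulVec y + γ • D.mulVec c)
      = M⁻¹.mulVec (M.mulVec c + W.mulVec (y - Wᵀ.mulVec c)) := by
        congr 1
        rw [Matrix.mulVec_sub, hM, Matrix.add_mulVec, Matrix.smul_mulVec,
          Matrix.mulVec_mulVec]
        abel
    _ = c + M⁻¹.mulVec (W.mulVec (y - Wᵀ.mulVec c)) := by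
        rw [Matrix.mulVec_add, ← hc]
end
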